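/- Let A ∈ M_n with W(A) ⊆ S_α for some α ∈ [0, π/2). Then for every s > 0 there exists a unitary matrix U ∈ M_n such that |Im A| ≤ (s·tan α / 2)·Re A + (tan α / (2s))·U* (Re A) U. -/

import Mathlib

open Matrix Set ComplexOrder

variable {m : Type*}

/-- The modulus `|X| = (XᴴX)^{1/2}` of a matrix. -/
noncomputable def matAbs [Fintype m] [DecidableEq m] (X : Matrix m m ℂ) : Matrix m m ℂ :=
  ((Matrix.posSemidef_conjTranspose_mul_self X).isHermitian.eigenvectorUnitary : Matrix m m ℂ) *
    diagonal ((↑) ∘ Real.sqrt ∘ (Matrix.posSemidef_conjTranspose_mul_self X).isHermitian.eigenvalues) *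
    (star (Matrix.posSemidef_conjTranspose_mul_self X).isHermitian.eigenvectorUnitary : Matrix m m ℂ)

theorem matAbs_posSemidef [Fintype m] [DecidableEq m] (X : Matrix m m ℂ) :
    (matAbs X).PosSemidef :=
  by
    unfold matAbs
    have hd := (Matrix.posSemidef_diagonal_iff (R := ℂ) (n := m)
      (d := ((↑) : ℝ → ℂ) ∘ Real.sqrt ∘ (Matrix.posSemidef_conjTranspose_mul_self X).isHermitian.eigenvalues)).2
      (fun i => Complex.zero_le_real.mpr (Real.sqrt_nonneg _))
    exact hd.mul_mul_conjTranspose_same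
      ((Matrix.posSemidef_conjTranspose_mul_self X).isHermitian.eigenvectorUnitary : Matrix m m ℂ)

/-- Functional calculus: apply `f : ℝ → ℝ` to a Hermitian matrix via its spectral
decomposition (junk value `0` for non-Hermitian input). -/
noncomputable def matFun [Fintype m] [DecidableEq m] (f : ℝ → ℝ) (X : Matrix m m ℂ) :
    Matrix m m ℂ :=
  if h : X.IsHermitian then
    (h.eigenvectorUnitary : Matrix m m ℂ) *
      Matrix.diagonal (fun i => (f (h.eigenvalues i) : ℂ)) *
      star (h.eigenvectorUnitary : Matrix m m ℂ)
  else 0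

/-- Real part `Re A = (A + Aᴴ)/2`. -/
noncomputable def reM (A : Matrix m m ℂ) : Matrix m m ℂ := (1/2 : ℂ) • (A + Aᴴ)

/-- Imaginary part `Im A = (A - Aᴴ)/(2i)`. -/
noncomputable def imM (A : Matrix m m ℂ) : Matrix m m ℂ := (1/(2*Complex.I)) • (A - Aᴴ)

/-- Numerical range `W(A) = {x* A x : x*x = 1}`. -/
def numRange [Fintype m] (A : Matrix m m ℂ) : Set ℂ :=
  {z | ∃ x : m → ℂ, star x ⬝ᵥ x = 1 ∧ z = star x ⬝ᵥ A.mulVec x}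

/-- The sector `S_α = {z : Re z ≥ 0, |Im z| ≤ (Re z) tan α}`. -/
def sector (α : ℝ) : Set ℂ := {z | 0 ≤ z.re ∧ |z.im| ≤ z.re * Real.tan α}

/-! With `R = Re A`, `B = Im A` and `t = tan α`, the sector condition gives `t R ± B ≥ 0`.
Let `S` be the sign of `B`: a Hermitian unitary with `S B = B S = |B|`. Then
`(s - S)(t R + B)(s - S) + (s + S)(t R - B)(s + S) = 2 t s² R + 2 t S R S - 4 s |B|`
is positive semidefinite, which is the claim with `U = S` after dividing by `4 s`. -/

lemma reM_isHermitian (A : Matrix m m ℂ) : (reM A).IsHermitian := by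
  simp only [IsHermitian, reM, conjTranspose_smul, conjTranspose_add, conjTranspose_conjTranspose]
  rw [add_comm]
  norm_num

lemma imM_isHermitian (A : Matrix m m ℂ) : (imM A).IsHermitian := by
  simp only [IsHermitian, imM, conjTranspose_smul, conjTranspose_sub, conjTranspose_conjTranspose]
  rw [← neg_sub, smul_neg, ← neg_smul]
  congr 1
  simp

lemma ofReal_mul_mem_sector {α r : ℝ} {z : ℂ} (hz : z ∈ sector α) (hr : 0 ≤ r) :
    (r : ℂ) * z ∈ sector α := by
  obtain ⟨hre, him⟩ := hz
  refine ⟨by simpa using mul_nonneg hr hre, ?_⟩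
  simpa [abs_mul, abs_of_nonneg hr, mul_assoc] using mul_le_mul_of_nonneg_left him hr

lemma sandwich_sum_eq {A : Type*} [Ring A] [Algebra ℝ A] {R B S P : A}
    (hSB : S * B = P) (hBS : B * S = P) (s t : ℝ) :
    (s • 1 - S) * (t • R + B) * (s • 1 - S) + (s • 1 + S) * (t • R - B) * (s • 1 + S) =
      (2 * t * s ^ 2) • R + (2 * t) • (S * R * S) - (4 * s) • P := by
  simp only [mul_add, add_mul, mul_sub, sub_mul, smul_mul_assoc, mul_smul_comm, one_mul, mul_one,
    hSB, hBS]
  module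

section Fintype

variable [Fintype m]

lemma dotProduct_conjTranspose_mulVec (A : Matrix m m ℂ) (x : m → ℂ) :
    star x ⬝ᵥ Aᴴ *ᵥ x = star (star x ⬝ᵥ A *ᵥ x) := by
  rw [mulVec_conjTranspose, dotProduct_star, star_star, dotProduct_mulVec]

lemma dotProduct_reM_mulVec (A : Matrix m m ℂ) (x : m → ℂ) :
    star x ⬝ᵥ reM A *ᵥ x = ((star x ⬝ᵥ A *ᵥ x).re : ℂ) := by
  simp only [reM, smul_mulVec, dotProduct_smul, add_mulVec, dotProduct_add,
    dotProduct_conjTranspose_mulVec, Complex.star_def, Complex.add_conj, smul_eq_mul]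
  push_cast
  ring

lemma dotProduct_imM_mulVec (A : Matrix m m ℂ) (x : m → ℂ) :
    star x ⬝ᵥ imM A *ᵥ x = ((star x ⬝ᵥ A *ᵥ x).im : ℂ) := by
  simp only [imM, smul_mulVec, dotProduct_smul, sub_mulVec, dotProduct_sub,
    dotProduct_conjTranspose_mulVec, Complex.star_def, Complex.sub_conj, smul_eq_mul]
  push_cast
  field_simp

lemma star_real_smul_dotProduct_real_smul (a : ℝ) (v w : m → ℂ) :
    star (a • v) ⬝ᵥ (a • w) = ((a ^ 2 : ℝ) : ℂ) * (star v ⬝ᵥ w) := by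
  simp only [star_smul, star_trivial, dotProduct_smul, smul_dotProduct, Complex.real_smul]
  push_cast
  ring

lemma dotProduct_mulVec_mem_sector {A : Matrix m m ℂ} {α : ℝ} (hA : numRange A ⊆ sector α)
    (x : m → ℂ) : star x ⬝ᵥ A *ᵥ x ∈ sector α := by
  rcases eq_or_ne x 0 with rfl | hx
  · simp [sector]
  obtain ⟨r, hr, hxx⟩ : ∃ r : ℝ, r > 0 ∧ (r : ℂ) = star x ⬝ᵥ x :=
    RCLike.pos_iff_exists_ofReal.mp (dotProduct_star_self_pos_iff.mpr hx)
  have hr' : (Real.sqrt r)⁻¹ ^ 2 * r = 1 := by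
    rw [inv_pow, Real.sq_sqrt hr.le, inv_mul_cancel₀ hr.ne']
  set u := (Real.sqrt r)⁻¹ • x
  have hu : star u ⬝ᵥ u = 1 := by
    rw [star_real_smul_dotProduct_real_smul, ← hxx, ← Complex.ofReal_mul, hr', Complex.ofReal_one]
  have hq : star x ⬝ᵥ A *ᵥ x = (r : ℂ) * (star u ⬝ᵥ A *ᵥ u) := by
    rw [mulVec_smul, star_real_smul_dotProduct_real_smul, ← mul_assoc, ← Complex.ofReal_mul,
      mul_comm r, hr', Complex.ofReal_one, one_mul]
  exact hq ▸ ofReal_mul_mem_sector (hA ⟨u, hu, rfl⟩) hr.le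

lemma posSemidef_tan_smul_reM_add_smul_imM {A : Matrix m m ℂ} {α c : ℝ}
    (hA : numRange A ⊆ sector α) (hc : |c| ≤ 1) :
    (Real.tan α • reM A + c • imM A).PosSemidef := by
  refine .of_dotProduct_mulVec_nonneg
    (((reM_isHermitian A).smul (.all _)).add ((imM_isHermitian A).smul (.all _))) fun x => ?_
  obtain ⟨hre, him⟩ := dotProduct_mulVec_mem_sector hA x
  set z := star x ⬝ᵥ A *ᵥ x
  have key : 0 ≤ Real.tan α * z.re + c * z.im := by
    have : |c * z.im| ≤ |z.im| := by
      rw [abs_mul]; exact mul_le_of_le_one_left (abs_nonneg _) hc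
    linarith [neg_abs_le (c * z.im)]
  simp only [add_mulVec, smul_mulVec, dotProduct_add, dotProduct_smul, dotProduct_reM_mulVec,
    dotProduct_imM_mulVec, Complex.real_smul]
  exact_mod_cast key

variable [DecidableEq m]

lemma matAbs_eq_cfc_abs {B : Matrix m m ℂ} (hB : B.IsHermitian) :
    matAbs B = cfc (fun x : ℝ => |x|) B := by
  have hBB := (Matrix.posSemidef_conjTranspose_mul_self B).isHermitian
  calc matAbs B = cfc Real.sqrt (Bᴴ * B) := by
        rw [hBB.cfc_eq]; simp [matAbs, IsHermitian.cfc]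
    _ = cfc (fun x => Real.sqrt (x ^ 2)) B := by
        rw [hB.eq, ← sq, cfc_comp_pow (ha := hB.isSelfAdjoint)
          (hf := ((spectrum ℝ B).toFinite.image _).continuousOn _)]
    _ = cfc (fun x : ℝ => |x|) B := by simp only [Real.sqrt_sq_eq_abs]

lemma exists_hermitian_involution_mul_eq_cfc_abs {B : Matrix m m ℂ} (hB : B.IsHermitian) :
    ∃ S : Matrix m m ℂ, Sᴴ = S ∧ S * S = 1 ∧ S * B = cfc (fun x : ℝ => |x|) B ∧
      B * S = cfc (fun x : ℝ => |x|) B := by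
  let σ : ℝ → ℝ := fun x => if 0 ≤ x then 1 else -1
  have hσ : ContinuousOn σ (spectrum ℝ B) := (spectrum ℝ B).toFinite.continuousOn _
  have hσB : cfc σ B * B = cfc (fun x : ℝ => |x|) B := by
    nth_rw 2 [← cfc_id' ℝ B]
    rw [← cfc_mul ..]
    refine cfc_congr fun x _ => ?_
    simp only [σ]; split_ifs with h
    · simp [abs_of_nonneg h]
    · simp [abs_of_neg (not_le.mp h)]
  refine ⟨cfc σ B, (cfc_predicate σ B).star_eq, ?_, hσB, ?_⟩
  · rw [← cfc_mul .., ← cfc_one ℝ B]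
    refine cfc_congr fun x _ => ?_
    simp only [σ]; split_ifs <;> norm_num
  · have hcomm : Commute B (cfc σ B) := by
      simpa only [cfc_id ℝ B] using cfc_commute_cfc id σ B
    rw [hcomm.eq, hσB]

lemma posSemidef_sandwich {R B S P : Matrix m m ℂ} {s t : ℝ} (hs : 0 < s)
    (hplus : (t • R + B).PosSemidef) (hminus : (t • R - B).PosSemidef)
    (hS : Sᴴ = S) (hSB : S * B = P) (hBS : B * S = P) :
    ((s * t / 2) • R + (t / (2 * s)) • (S * R * S) - P).PosSemidef := by
  have hsum := (hplus.conjTranspose_mul_mul_same (s • 1 - S)).add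
    (hminus.conjTranspose_mul_mul_same (s • 1 + S))
  simp only [conjTranspose_sub, conjTranspose_add, conjTranspose_smul, conjTranspose_one,
    star_trivial, hS, sandwich_sum_eq hSB hBS] at hsum
  convert hsum.smul (inv_nonneg.mpr (by positivity : (0 : ℝ) ≤ 4 * s)) using 1
  match_scalars <;> field_simp <;> ring

end Fintype

theorem abs_im_le_tan_re_general {n : ℕ} (A : Matrix (Fin n) (Fin n) ℂ) (α : ℝ)
    (hA : numRange A ⊆ sector α) :
    ∀ s : ℝ, 0 < s → ∃ U ∈ Matrix.unitaryGroup (Fin n) ℂ,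
      ((s * Real.tan α / 2) • reM A + (Real.tan α / (2 * s)) • (Uᴴ * reM A * U)
        - matAbs (imM A)).PosSemidef := by
  intro s hs
  have hB := imM_isHermitian A
  obtain ⟨S, hS, hSS, hSB, hBS⟩ := exists_hermitian_involution_mul_eq_cfc_abs hB
  rw [← matAbs_eq_cfc_abs hB] at hSB hBS
  have hplus := posSemidef_tan_smul_reM_add_smul_imM hA (c := 1) (by norm_num)
  have hminus := posSemidef_tan_smul_reM_add_smul_imM hA (c := -1) (by norm_num)
  rw [one_smul] at hplus
  rw [neg_one_smul, ← sub_eq_add_neg] at hminus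
  refine ⟨S, ?_, ?_⟩
  · rw [mem_unitaryGroup_iff, star_eq_conjTranspose, hS, hSS]
  · rw [hS]
    exact posSemidef_sandwich hs hplus hminus hS hSB hBS

theorem abs_im_le_tan_re {n : ℕ} (A : Matrix (Fin n) (Fin n) ℂ) (α : ℝ)
    (hα₀ : 0 ≤ α) (hα₁ : α < Real.pi / 2) (hA : numRange A ⊆ sector α) :
    ∀ s : ℝ, 0 < s → ∃ U ∈ Matrix.unitaryGroup (Fin n) ℂ,
      ((s * Real.tan α / 2) • reM A + (Real.tan α / (2 * s)) • (Uᴴ * reM A * U)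
        - matAbs (imM A)).PosSemidef :=
  abs_im_le_tan_re_general A α hA
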